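/- arXiv:2003.03888 — 3 statements merged into one kernel-verified Lean document; each statement's English description precedes it below -/
import Mathlib

section
/- Let σ₁,...,σₙ be independent Rademacher random variables. Then E[|∑_{i=1}^n σ_i|] ≥ √(n/2). -/
/-!
Counting the sign vectors with `k` entries equal to `+1` turns the expectation into
`2⁻ⁿ ∑ₖ C(n,k) |n - 2k|`. Since `C(n,k) (n - 2k) = n (C(n-1,k) - C(n-1,k-1))`, the partial sums
of `C(n,k) (n - 2k)` telescope to `n C(n-1,M)`; the full sum vanishes, so the absolute sum is twice
the sum over `k ≤ n/2`, namely `2n C(n-1, ⌊n/2⌋)`. The bound then reduces to the central binomial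
estimate `16ᵐ ≤ 4m C(2m,m)²`, whose ratio between consecutive `m` is `(2m+1)² / (4m(m+1)) ≥ 1`.
-/

open Finset

theorem Nat.sixteen_pow_le_four_mul_mul_centralBinom_sq {m : ℕ} (hm : 0 < m) :
    16 ^ m ≤ 4 * m * m.centralBinom ^ 2 := by
  induction m, hm using Nat.le_induction with
  | base => decide
  | succ m hm ih =>
    have hrec := Nat.succ_mul_centralBinom_succ m
    refine le_of_mul_le_mul_left ?_ (by positivity : 0 < (m + 1) ^ 2)
    calc (m + 1) ^ 2 * 16 ^ (m + 1) = 16 * (m + 1) ^ 2 * 16 ^ m := by ring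
      _ ≤ 16 * (m + 1) ^ 2 * (4 * m * m.centralBinom ^ 2) := by gcongr
      _ ≤ 4 * (m + 1) * (2 * (2 * m + 1) * m.centralBinom) ^ 2 := by
        nlinarith [Nat.zero_le (m.centralBinom ^ 2)]
      _ = (m + 1) ^ 2 * (4 * (m + 1) * (m + 1).centralBinom ^ 2) := by rw [← hrec]; ring

theorem Nat.centralBinom_succ_eq_two_mul_choose (m : ℕ) :
    (m + 1).centralBinom = 2 * (2 * m + 1).choose (m + 1) := by
  rw [Nat.centralBinom_eq_two_mul_choose, show 2 * (m + 1) = 2 * m + 1 + 1 by ring,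
    Nat.choose_succ_succ', Nat.choose_symm_half]
  ring

theorem Nat.four_pow_le_eight_mul_mul_choose_half_sq {n : ℕ} (hn : 0 < n) :
    4 ^ n ≤ 8 * n * (n - 1).choose (n / 2) ^ 2 := by
  obtain ⟨m, rfl | rfl⟩ := n.even_or_odd'
  · obtain ⟨j, rfl⟩ := Nat.exists_eq_add_one_of_ne_zero (by omega : m ≠ 0)
    have hcentral := Nat.sixteen_pow_le_four_mul_mul_centralBinom_sq (by omega : 0 < j + 1)
    rw [Nat.centralBinom_succ_eq_two_mul_choose] at hcentral
    rw [show 2 * (j + 1) - 1 = 2 * j + 1 by omega, show 2 * (j + 1) / 2 = j + 1 by omega,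
      pow_mul]
    norm_num
    exact hcentral.trans_eq (by ring)
  · rw [show (2 * m + 1) / 2 = m by omega, Nat.add_sub_cancel,
      ← Nat.centralBinom_eq_two_mul_choose, pow_succ, pow_mul]
    norm_num
    rcases m.eq_zero_or_pos with rfl | hm
    · decide
    · nlinarith [Nat.sixteen_pow_le_four_mul_mul_centralBinom_sq hm]

theorem Nat.choose_succ_mul_sub_two_mul (n k : ℕ) :
    (n.choose (k + 1) : ℤ) * (n - 2 * (k + 1)) =
      n * ((n - 1).choose (k + 1) - (n - 1).choose k) := by
  cases n with
  | zero => simp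
  | succ m =>
    have hpascal : ((m + 1).choose (k + 1) : ℤ) = m.choose k + m.choose (k + 1) := by
      exact_mod_cast Nat.choose_succ_succ' m k
    have habsorb : ((m : ℤ) + 1) * m.choose k = (m + 1).choose (k + 1) * (k + 1) := by
      exact_mod_cast Nat.add_one_mul_choose_eq m k
    push_cast [Nat.add_sub_cancel]
    linear_combination ((m : ℤ) + 1) * hpascal + 2 * habsorb

theorem Nat.sum_range_choose_mul_sub_two_mul (n M : ℕ) :
    ∑ k ∈ range (M + 1), (n.choose k : ℤ) * (n - 2 * k) = n * (n - 1).choose M := by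
  induction M with
  | zero => simp
  | succ M ih =>
    rw [sum_range_succ, ih]
    push_cast
    linear_combination Nat.choose_succ_mul_sub_two_mul n M

theorem Nat.sum_range_choose_mul_abs_sub_two_mul (n : ℕ) :
    ∑ k ∈ range (n + 1), (n.choose k : ℤ) * |(n : ℤ) - 2 * k| =
      2 * n * (n - 1).choose (n / 2) := by
  have hm : n / 2 + 1 ≤ n + 1 := by omega
  have htotal : ∑ k ∈ range (n + 1), (n.choose k : ℤ) * (n - 2 * k) = 0 := by
    rw [Nat.sum_range_choose_mul_sub_two_mul]
    rcases n with _ | n <;> simp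
  rw [← sum_range_add_sum_Ico _ hm, Nat.sum_range_choose_mul_sub_two_mul] at htotal
  have hlow : ∑ k ∈ range (n / 2 + 1), (n.choose k : ℤ) * |(n : ℤ) - 2 * k| =
      ∑ k ∈ range (n / 2 + 1), (n.choose k : ℤ) * (n - 2 * k) := by
    refine sum_congr rfl fun k hk => ?_
    rw [abs_of_nonneg (by grind)]
  have hhigh : ∑ k ∈ Ico (n / 2 + 1) (n + 1), (n.choose k : ℤ) * |(n : ℤ) - 2 * k| =
      -∑ k ∈ Ico (n / 2 + 1) (n + 1), (n.choose k : ℤ) * (n - 2 * k) := by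
    rw [← sum_neg_distrib]
    refine sum_congr rfl fun k hk => ?_
    rw [abs_of_nonpos (by grind), mul_neg]
  rw [← sum_range_add_sum_Ico _ hm, hlow, hhigh, Nat.sum_range_choose_mul_sub_two_mul]
  linear_combination -htotal

theorem Fintype.sum_fun_bool_apply_card {ι M : Type*} [Fintype ι] [DecidableEq ι]
    [AddCommMonoid M] (f : ℕ → M) :
    ∑ σ : ι → Bool, f #{i | σ i} =
      ∑ k ∈ range (Fintype.card ι + 1), (Fintype.card ι).choose k • f k := by
  rw [← card_univ, ← sum_powerset_apply_card, powerset_univ]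
  exact sum_nbij' (fun σ => ({i | σ i} : Finset ι)) (fun s i => decide (i ∈ s))
    (by simp) (by simp) (by simp) (by simp) (by simp)

theorem sum_ite_bool_eq_two_mul_card_sub {ι : Type*} [Fintype ι] (σ : ι → Bool) :
    ∑ i, (if σ i then (1 : ℝ) else -1) = 2 * #{i | σ i} - Fintype.card ι := by
  have hsign : ∀ i, (if σ i then (1 : ℝ) else -1) = 2 * (if σ i then 1 else 0) - 1 := by
    intro i
    split_ifs <;> norm_num
  simp only [hsign, sum_sub_distrib, ← mul_sum, sum_boole, sum_const, card_univ]
  simp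

/-- Khintchine lower bound: E|∑ σᵢ| ≥ √(n/2) for n independent Rademacher signs. -/
theorem rademacher_abs_sum_ge_sqrt (n : ℕ) :
    Real.sqrt ((n : ℝ) / 2) ≤
      (∑ σ : Fin n → Bool, |∑ i, (if σ i then (1 : ℝ) else -1)|) / 2 ^ n := by
  have hsum : ∑ σ : Fin n → Bool, |∑ i, (if σ i then (1 : ℝ) else -1)| =
      2 * n * (n - 1).choose (n / 2) := by
    simp_rw [sum_ite_bool_eq_two_mul_card_sub, Fintype.card_fin]
    rw [Fintype.sum_fun_bool_apply_card (fun k => |2 * (k : ℝ) - n|), Fintype.card_fin]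
    simp_rw [nsmul_eq_mul, abs_sub_comm]
    exact_mod_cast Nat.sum_range_choose_mul_abs_sub_two_mul n
  rw [hsum, Real.sqrt_le_left (by positivity), div_pow, le_div_iff₀ (by positivity)]
  rcases n.eq_zero_or_pos with rfl | hn
  · simp
  have hbound : (4 : ℝ) ^ n ≤ 8 * n * (n - 1).choose (n / 2) ^ 2 := by
    exact_mod_cast Nat.four_pow_le_eight_mul_mul_choose_half_sq hn
  calc (n : ℝ) / 2 * (2 ^ n) ^ 2 = n / 2 * 4 ^ n := by
        rw [← pow_mul, mul_comm n 2, pow_mul]; norm_num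
    _ ≤ n / 2 * (8 * n * (n - 1).choose (n / 2) ^ 2) := by gcongr
    _ = (2 * n * (n - 1).choose (n / 2)) ^ 2 := by ring
end

section
/- Let H be a real inner product space, Φ₁,...,Φₙ ∈ H with ‖Φᵢ‖ ≤ 1 for all i, and σ₁,...,σₙ independent Rademacher variables. Define the Rademacher complexity R_n = E_σ[ sup_{c ∈ H, ‖c‖ ≤ 1} ∑_{i=1}^n σ_i ‖Φ_i − c‖² ]. Then R_n ≤ 3√n. -/
/-!
Expanding `‖Φ i - c‖² = ‖Φ i‖² - 2⟪Φ i, c⟫ + ‖c‖²` bounds the supremum over the unit ball, for each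
sign pattern `σ`, by `∑ σᵢ ‖Φ i‖² + 2 ‖∑ σᵢ Φ i‖ + |∑ σᵢ|`. The first term has mean zero, and by
Cauchy–Schwarz the means of the other two are at most the square roots of their second moments,
`E ‖∑ σᵢ Φ i‖² = ∑ ‖Φ i‖² ≤ n` and `E (∑ σᵢ)² = n`.
-/

open Finset Real RealInnerProductSpace

def rademacherSign (b : Bool) : ℝ := if b then 1 else -1

@[simp] lemma rademacherSign_true : rademacherSign true = 1 := rfl

@[simp] lemma rademacherSign_false : rademacherSign false = -1 := rfl

lemma rademacherSign_not (b : Bool) : rademacherSign (!b) = -rademacherSign b := by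
  cases b <;> simp

lemma rademacherSign_mul_self (b : Bool) : rademacherSign b * rademacherSign b = 1 := by
  cases b <;> simp

lemma Finset.sum_le_sqrt_card_mul_sum_sq {α : Type*} (s : Finset α) (f : α → ℝ) :
    ∑ a ∈ s, f a ≤ √(#s * ∑ a ∈ s, f a ^ 2) :=
  (le_abs_self _).trans (abs_le_sqrt (sq_sum_le_card_mul_sum_sq (s := s) (f := f)))

section SignPatterns

variable {ι : Type*} [Fintype ι] [DecidableEq ι]

lemma sum_eq_zero_of_add_update_not_eq_zero {M : Type*} [AddCommMonoid M] (i : ι)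
    (f : (ι → Bool) → M) (hf : ∀ σ, f σ + f (Function.update σ i (!σ i)) = 0) :
    ∑ σ, f σ = 0 :=
  sum_involution (fun σ _ => Function.update σ i (!σ i)) (fun σ _ => hf σ)
    (fun σ _ _ h => by simpa using congrFun h i) (fun _ _ => mem_univ _)
    (fun σ _ => by simp)

lemma sum_rademacherSign (i : ι) : ∑ σ : ι → Bool, rademacherSign (σ i) = 0 :=
  sum_eq_zero_of_add_update_not_eq_zero i _ fun σ => by simp [rademacherSign_not]

lemma sum_rademacherSign_mul_rademacherSign (i j : ι) :
    ∑ σ : ι → Bool, rademacherSign (σ i) * rademacherSign (σ j) =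
      if i = j then 2 ^ Fintype.card ι else 0 := by
  split_ifs with hij
  · subst hij
    simp [rademacherSign_mul_self]
  · refine sum_eq_zero_of_add_update_not_eq_zero i _ fun σ => ?_
    rw [Function.update_self, Function.update_of_ne (Ne.symm hij), rademacherSign_not]
    ring

lemma sum_sum_rademacherSign_mul_eq_zero (w : ι → ℝ) :
    ∑ σ : ι → Bool, ∑ i, rademacherSign (σ i) * w i = 0 := by
  rw [sum_comm]
  exact sum_eq_zero fun i _ => by rw [← sum_mul, sum_rademacherSign, zero_mul]

variable {E : Type*} [NormedAddCommGroup E] [InnerProductSpace ℝ E]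

lemma sum_norm_sum_rademacherSign_smul_sq (v : ι → E) :
    ∑ σ : ι → Bool, ‖∑ i, rademacherSign (σ i) • v i‖ ^ 2 =
      2 ^ Fintype.card ι * ∑ i, ‖v i‖ ^ 2 := by
  have expand : ∀ σ : ι → Bool, ‖∑ i, rademacherSign (σ i) • v i‖ ^ 2 =
      ∑ i, ∑ j, rademacherSign (σ i) * rademacherSign (σ j) * ⟪v j, v i⟫ := fun σ => by
    simp only [← real_inner_self_eq_norm_sq, sum_inner, inner_sum, real_inner_smul_left,
      real_inner_smul_right, mul_assoc]
  simp only [expand]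
  rw [sum_comm]
  simp only [sum_comm (γ := ι → Bool), ← sum_mul, sum_rademacherSign_mul_rademacherSign,
    ite_mul, zero_mul, sum_ite_eq, mem_univ, if_true, real_inner_self_eq_norm_sq, mul_sum]

lemma sum_norm_sum_rademacherSign_smul_le (v : ι → E) :
    ∑ σ : ι → Bool, ‖∑ i, rademacherSign (σ i) • v i‖ ≤
      2 ^ Fintype.card ι * √(∑ i, ‖v i‖ ^ 2) := by
  refine (sum_le_sqrt_card_mul_sum_sq _ _).trans_eq ?_
  rw [sum_norm_sum_rademacherSign_smul_sq, card_univ, Fintype.card_fun, Fintype.card_bool,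
    Nat.cast_pow, Nat.cast_two, ← mul_assoc, ← sq, sqrt_mul (by positivity), sqrt_sq (by positivity)]

lemma sum_abs_sum_rademacherSign_le :
    ∑ σ : ι → Bool, |∑ i, rademacherSign (σ i)| ≤ 2 ^ Fintype.card ι * √(Fintype.card ι) := by
  simpa [← Real.norm_eq_abs] using sum_norm_sum_rademacherSign_smul_le (fun _ : ι => (1 : ℝ))

end SignPatterns

section WeightedDistances

variable {ι E : Type*} [Fintype ι] [NormedAddCommGroup E] [InnerProductSpace ℝ E]

lemma sum_mul_norm_sub_sq (a : ι → ℝ) (Φ : ι → E) (c : E) :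
    ∑ i, a i * ‖Φ i - c‖ ^ 2 =
      ∑ i, a i * ‖Φ i‖ ^ 2 - 2 * ⟪∑ i, a i • Φ i, c⟫ + (∑ i, a i) * ‖c‖ ^ 2 := by
  simp only [norm_sub_sq_real, sum_inner, real_inner_smul_left, mul_sum, sum_mul,
    ← sum_sub_distrib, ← sum_add_distrib]
  exact sum_congr rfl fun i _ => by ring

lemma sum_mul_norm_sub_sq_le (a : ι → ℝ) (Φ : ι → E) {c : E} (hc : ‖c‖ ≤ 1) :
    ∑ i, a i * ‖Φ i - c‖ ^ 2 ≤ ∑ i, a i * ‖Φ i‖ ^ 2 + 2 * ‖∑ i, a i • Φ i‖ + |∑ i, a i| := by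
  have h_inner : -⟪∑ i, a i • Φ i, c⟫ ≤ ‖∑ i, a i • Φ i‖ :=
    (neg_le_abs _).trans <| (abs_real_inner_le_norm _ c).trans <|
      mul_le_of_le_one_right (norm_nonneg _) hc
  have h_sq : (∑ i, a i) * ‖c‖ ^ 2 ≤ |∑ i, a i| := by
    have hc2 : ‖c‖ ^ 2 ≤ 1 := pow_le_one₀ (norm_nonneg c) hc
    calc (∑ i, a i) * ‖c‖ ^ 2 ≤ |∑ i, a i| * ‖c‖ ^ 2 := by gcongr; exact le_abs_self _
      _ ≤ |∑ i, a i| := mul_le_of_le_one_right (abs_nonneg _) hc2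
  rw [sum_mul_norm_sub_sq]
  linarith

lemma sSup_sum_mul_norm_sub_sq_le (a : ι → ℝ) (Φ : ι → E) :
    sSup ((fun c : E => ∑ i, a i * ‖Φ i - c‖ ^ 2) '' {c : E | ‖c‖ ≤ 1}) ≤
      ∑ i, a i * ‖Φ i‖ ^ 2 + 2 * ‖∑ i, a i • Φ i‖ + |∑ i, a i| :=
  csSup_le (Set.Nonempty.image _ ⟨0, by simp⟩) <| by
    rintro _ ⟨c, hc, rfl⟩
    exact sum_mul_norm_sub_sq_le a Φ hc

end WeightedDistances

/-- The Rademacher complexity of the single-center squared-distance class is at most 3√n. -/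
theorem rademacher_complexity_center_class_le {H : Type*} [NormedAddCommGroup H]
    [InnerProductSpace ℝ H] (n : ℕ) (Φ : Fin n → H) (hΦ : ∀ i, ‖Φ i‖ ≤ 1) :
    (∑ σ : Fin n → Bool,
        sSup ((fun c : H => ∑ i, (if σ i then (1 : ℝ) else -1) * ‖Φ i - c‖ ^ 2) ''
          {c : H | ‖c‖ ≤ 1})) / 2 ^ n ≤ 3 * Real.sqrt n := by
  have hΦ_sq : √(∑ i, ‖Φ i‖ ^ 2) ≤ √n := by
    gcongr
    simpa using sum_le_sum fun i (_ : i ∈ univ) => pow_le_one₀ (norm_nonneg (Φ i)) (hΦ i)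
  have h_norm := sum_norm_sum_rademacherSign_smul_le Φ
  have h_abs := sum_abs_sum_rademacherSign_le (ι := Fin n)
  simp only [Fintype.card_fin] at h_norm h_abs
  rw [div_le_iff₀ (by positivity)]
  calc ∑ σ : Fin n → Bool, sSup ((fun c : H => ∑ i, rademacherSign (σ i) * ‖Φ i - c‖ ^ 2) ''
          {c : H | ‖c‖ ≤ 1})
      ≤ ∑ σ : Fin n → Bool, (∑ i, rademacherSign (σ i) * ‖Φ i‖ ^ 2
          + 2 * ‖∑ i, rademacherSign (σ i) • Φ i‖ + |∑ i, rademacherSign (σ i)|) :=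
        sum_le_sum fun σ _ => sSup_sum_mul_norm_sub_sq_le _ Φ
    _ = 2 * ∑ σ : Fin n → Bool, ‖∑ i, rademacherSign (σ i) • Φ i‖
          + ∑ σ : Fin n → Bool, |∑ i, rademacherSign (σ i)| := by
        rw [sum_add_distrib, sum_add_distrib, sum_sum_rademacherSign_mul_eq_zero, mul_sum,
          zero_add]
    _ ≤ 2 * (2 ^ n * √n) + 2 ^ n * √n := by
        gcongr
        exact h_norm.trans (by gcongr)
    _ = 3 * √n * 2 ^ n := by ring
end

section
/- Fix k ≥ 1 and n divisible by k. Let e₁,...,e_k be orthonormal vectors in a real Hilbert space H, and take the data Φ₁,...,Φₙ with exactly n/k copies of each e_j. For σ ∈ {±1}^k define g_σ(x) = min_{1≤i≤k} ‖Φ_x − σ_i e_i‖² where Φ_x is the data point. Then the empirical Rademacher complexity E_{σ'}[ max_{σ ∈ {±1}^k} ∑_{t=1}^n σ'_t g_σ(x_t) ] is at least √(kn/2). -/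
/-!
For orthonormal `e`, the loss `g_σ(e j)` is `0` if `σ j = +1` and at least `2` (exactly `4` when
`k = 1`) if `σ j = -1`. Given the Rademacher signs `σ'`, choosing `σ j = +1` exactly on the rows of
negative row sum `Sⱼ` makes the objective `∑ⱼ c · max 0 Sⱼ`. By symmetry
`𝔼 max 0 S = 𝔼 |S| / 2`, and Khintchine's inequality in the form `(𝔼 S²)³ ≤ (𝔼 |S|)² 𝔼 S⁴`
(two Cauchy–Schwarz steps), with `𝔼 S² = m` and `𝔼 S⁴ ≤ 3m²`, gives `𝔼 |S| ≥ √(m/3)`.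
-/
open Finset

def boolSign (b : Bool) : ℝ := if b then 1 else -1

@[simp] lemma boolSign_true : boolSign true = 1 := rfl
@[simp] lemma boolSign_false : boolSign false = -1 := rfl

lemma boolSign_not (b : Bool) : boolSign (!b) = -boolSign b := by
  cases b <;> simp

section RademacherSum

variable {m : ℕ}

def rademacherSum (f : Fin m → Bool) : ℝ := ∑ i, boolSign (f i)

lemma sum_fun_fin_succ {M : Type*} [AddCommMonoid M] (F : (Fin (m + 1) → Bool) → M) :
    ∑ f, F f = ∑ b : Bool, ∑ g : Fin m → Bool, F (Fin.cons b g) := by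
  rw [← Fintype.sum_prod_type']
  exact (Fintype.sum_equiv (Fin.consEquiv fun _ => Bool) _ _ fun _ => rfl).symm

lemma rademacherSum_cons (b : Bool) (g : Fin m → Bool) :
    rademacherSum (Fin.cons b g : Fin (m + 1) → Bool) = boolSign b + rademacherSum g := by
  simp [rademacherSum, Fin.sum_univ_succ]

lemma rademacherSum_not (f : Fin m → Bool) :
    rademacherSum (fun i => !f i) = -rademacherSum f := by
  simp [rademacherSum, boolSign_not]

lemma sum_rademacherSum_sq (m : ℕ) :
    ∑ f : Fin m → Bool, rademacherSum f ^ 2 = m * 2 ^ m := by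
  induction m with
  | zero => simp [rademacherSum]
  | succ n ih =>
    simp only [sum_fun_fin_succ, rademacherSum_cons, Fintype.sum_bool, boolSign_true,
      boolSign_false, ← sum_add_distrib]
    have h (x : ℝ) : (1 + x) ^ 2 + (-1 + x) ^ 2 = 2 * x ^ 2 + 2 := by ring
    simp only [h, sum_add_distrib, ← mul_sum, ih, sum_const, card_univ, Fintype.card_fun,
      Fintype.card_bool, Fintype.card_fin, nsmul_eq_mul]
    push_cast
    ring

lemma sum_rademacherSum_pow_four (m : ℕ) :
    ∑ f : Fin m → Bool, rademacherSum f ^ 4 = (3 * (m : ℝ) ^ 2 - 2 * m) * 2 ^ m := by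
  induction m with
  | zero => simp [rademacherSum]
  | succ n ih =>
    simp only [sum_fun_fin_succ, rademacherSum_cons, Fintype.sum_bool, boolSign_true,
      boolSign_false, ← sum_add_distrib]
    have h (x : ℝ) : (1 + x) ^ 4 + (-1 + x) ^ 4 = 2 * x ^ 4 + 12 * x ^ 2 + 2 := by ring
    simp only [h, sum_add_distrib, ← mul_sum, ih, sum_rademacherSum_sq, sum_const, card_univ,
      Fintype.card_fun, Fintype.card_bool, Fintype.card_fin, nsmul_eq_mul]
    push_cast
    ring

lemma sum_max_zero_rademacherSum (m : ℕ) :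
    ∑ f : Fin m → Bool, max 0 (rademacherSum f) = (∑ f : Fin m → Bool, |rademacherSum f|) / 2 := by
  have hneg : ∑ f : Fin m → Bool, max 0 (rademacherSum f)
      = ∑ f : Fin m → Bool, max 0 (-rademacherSum f) :=
    Fintype.sum_bijective (fun f i => !f i) (Function.Involutive.bijective fun f => by simp) _ _
      fun f => by rw [rademacherSum_not, neg_neg]
  have hsplit (x : ℝ) : max 0 x + max 0 (-x) = |x| := by
    rcases le_total 0 x with h | h
    · simp [h, abs_of_nonneg h]
    · simp [h, abs_of_nonpos h]
  rw [eq_div_iff two_ne_zero, mul_two]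
  nth_rewrite 2 [hneg]
  rw [← sum_add_distrib]
  simp only [hsplit]

end RademacherSum

lemma sum_sq_pow_three_le {ι : Type*} (s : Finset ι) {x : ι → ℝ} (hx : ∀ i ∈ s, 0 ≤ x i) :
    (∑ i ∈ s, x i ^ 2) ^ 3 ≤ (∑ i ∈ s, x i) ^ 2 * ∑ i ∈ s, x i ^ 4 := by
  have h₁ : (∑ i ∈ s, x i ^ 2) ^ 2 ≤ (∑ i ∈ s, x i) * ∑ i ∈ s, x i ^ 3 :=
    sum_sq_le_sum_mul_sum_of_sq_le_mul s hx (fun i hi => pow_nonneg (hx i hi) 3)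
      fun i _ => le_of_eq (by ring)
  have h₂ : (∑ i ∈ s, x i ^ 3) ^ 2 ≤ (∑ i ∈ s, x i ^ 2) * ∑ i ∈ s, x i ^ 4 :=
    sum_sq_le_sum_mul_sum_of_sq_le_mul s (fun i _ => sq_nonneg _)
      (fun i hi => pow_nonneg (hx i hi) 4) fun i _ => le_of_eq (by ring)
  set a := ∑ i ∈ s, x i ^ 2
  have hd : 0 ≤ ∑ i ∈ s, x i ^ 4 := sum_nonneg fun i hi => pow_nonneg (hx i hi) 4
  rcases (sum_nonneg fun i _ => sq_nonneg (x i) : 0 ≤ a).eq_or_lt with ha | ha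
  · rw [show a = 0 from ha.symm, zero_pow three_ne_zero]
    exact mul_nonneg (sq_nonneg _) hd
  refine le_of_mul_le_mul_left ?_ ha
  calc a * a ^ 3 = (a ^ 2) ^ 2 := by ring
    _ ≤ ((∑ i ∈ s, x i) * ∑ i ∈ s, x i ^ 3) ^ 2 := pow_le_pow_left₀ (sq_nonneg a) h₁ 2
    _ = (∑ i ∈ s, x i) ^ 2 * (∑ i ∈ s, x i ^ 3) ^ 2 := mul_pow _ _ _
    _ ≤ (∑ i ∈ s, x i) ^ 2 * (a * ∑ i ∈ s, x i ^ 4) := by gcongr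
    _ = a * ((∑ i ∈ s, x i) ^ 2 * ∑ i ∈ s, x i ^ 4) := by ring

lemma sqrt_div_three_mul_two_pow_le_sum_abs_rademacherSum (m : ℕ) :
    √((m : ℝ) / 3) * 2 ^ m ≤ ∑ f : Fin m → Bool, |rademacherSum f| := by
  rcases Nat.eq_zero_or_pos m with rfl | hm
  · simp
  have hmoment :=
    sum_sq_pow_three_le univ fun (f : Fin m → Bool) _ => abs_nonneg (rademacherSum f)
  simp only [sq_abs, Even.pow_abs ⟨2, rfl⟩] at hmoment
  rw [sum_rademacherSum_sq, sum_rademacherSum_pow_four] at hmoment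
  set A := ∑ f : Fin m → Bool, |rademacherSum f|
  have hA : (m : ℝ) / 3 * (2 ^ m) ^ 2 ≤ A ^ 2 := by
    have hpos : (0 : ℝ) < (m : ℝ) ^ 2 * 2 ^ m * 3 := by positivity
    refine le_of_mul_le_mul_left ?_ hpos
    calc (m : ℝ) ^ 2 * 2 ^ m * 3 * ((m : ℝ) / 3 * (2 ^ m) ^ 2) = ((m : ℝ) * 2 ^ m) ^ 3 := by ring
      _ ≤ A ^ 2 * ((3 * (m : ℝ) ^ 2 - 2 * m) * 2 ^ m) := hmoment
      _ ≤ (m : ℝ) ^ 2 * 2 ^ m * 3 * A ^ 2 := by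
        nlinarith [sq_nonneg A, (by positivity : (0 : ℝ) ≤ m * 2 ^ m)]
  rw [← Real.sqrt_sq (by positivity : (0 : ℝ) ≤ 2 ^ m), ← Real.sqrt_mul (by positivity)]
  exact (Real.sqrt_le_left (sum_nonneg fun f _ => abs_nonneg _)).mpr hA

section Geometry

variable {H : Type*} [NormedAddCommGroup H] [InnerProductSpace ℝ H]

lemma norm_sub_boolSign_smul_sq {ι : Type*} [DecidableEq ι] {e : ι → H} (he : Orthonormal ℝ e)
    (b : Bool) (i j : ι) :
    ‖e j - boolSign b • e i‖ ^ 2 = if i = j then (if b then 0 else 4) else 2 := by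
  have hsq : boolSign b ^ 2 = 1 := by cases b <;> norm_num [boolSign]
  rw [norm_sub_sq_real, real_inner_smul_right, norm_smul, mul_pow, he.1 i, he.1 j,
    Real.norm_eq_abs, sq_abs, hsq, orthonormal_iff_ite.mp he j i]
  by_cases hij : i = j
  · subst hij; cases b <;> norm_num [boolSign]
  · norm_num [hij, Ne.symm hij]

variable {k : ℕ}

/-- The clustering loss `g_σ` evaluated at the data point `e j`. -/
def clusterLoss (hne : (univ : Finset (Fin k)).Nonempty) (e : Fin k → H) (σ : Fin k → Bool)
    (j : Fin k) : ℝ :=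
  univ.inf' hne fun i => ‖e j - boolSign (σ i) • e i‖ ^ 2

lemma clusterLoss_eq (hne : (univ : Finset (Fin k)).Nonempty) {e : Fin k → H}
    (he : Orthonormal ℝ e) (σ : Fin k → Bool) (j : Fin k) :
    clusterLoss hne e σ j = if σ j then 0 else if k = 1 then 4 else 2 := by
  simp only [clusterLoss, norm_sub_boolSign_smul_sq he]
  refine le_antisymm ?_ (le_inf' _ _ fun i _ => ?_)
  · by_cases hσ : σ j = true
    · exact (inf'_le _ (mem_univ j)).trans (by simp [hσ])
    by_cases hk : k = 1
    · exact (inf'_le _ (mem_univ j)).trans (by simp [hσ, hk])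
    have : Nontrivial (Fin k) := Fin.nontrivial_iff_two_le.mpr (by have := j.pos; omega)
    obtain ⟨i, hij⟩ := exists_ne j
    exact (inf'_le _ (mem_univ i)).trans (by simp [hσ, hk, hij])
  · by_cases hij : i = j
    · subst hij; split_ifs <;> norm_num at *
    · have hk : k ≠ 1 := fun hk => hij (Fin.ext (by omega))
      split_ifs <;> norm_num

end Geometry

lemma sum_boolSign_mul_eq_sum_rademacherSum_mul {k m : ℕ} (σ' : Fin k × Fin m → Bool)
    (g : Fin k → ℝ) :
    ∑ p, boolSign (σ' p) * g p.1 = ∑ j, rademacherSum (fun t => σ' (j, t)) * g j := by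
  simp [Fintype.sum_prod_type, rademacherSum, sum_mul]

lemma sum_rademacherSum_row {M : Type*} [AddCommMonoid M] {k m : ℕ} (j : Fin k)
    (φ : (Fin m → Bool) → M) :
    ∑ σ' : Fin k × Fin m → Bool, φ (fun t => σ' (j, t))
      = (2 ^ (m * (k - 1))) • ∑ f : Fin m → Bool, φ f := by
  rw [← Fintype.sum_equiv (Equiv.curry (Fin k) (Fin m) Bool).symm _ _ fun _ => rfl]
  simpa [← pow_mul] using Fintype.sum_piFinset_apply φ (univ : Finset (Fin m → Bool)) j

section Objective

variable {H : Type*} [NormedAddCommGroup H] [InnerProductSpace ℝ H] {k m : ℕ}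

lemma sum_mul_max_zero_le_sup'_clusterLoss (hne : (univ : Finset (Fin k)).Nonempty)
    {e : Fin k → H} (he : Orthonormal ℝ e) (σ' : Fin k × Fin m → Bool) :
    ∑ j, (if k = 1 then (4 : ℝ) else 2) * max 0 (rademacherSum fun t => σ' (j, t)) ≤
      univ.sup' univ_nonempty fun σ : Fin k → Bool =>
        ∑ p, boolSign (σ' p) * clusterLoss hne e σ p.1 := by
  -- switch off exactly the rows with negative Rademacher sum
  let σ₀ : Fin k → Bool := fun j => decide ((rademacherSum fun t => σ' (j, t)) < 0)
  calc _ = ∑ j, (rademacherSum fun t => σ' (j, t)) * clusterLoss hne e σ₀ j := by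
        refine sum_congr rfl fun j _ => ?_
        rw [clusterLoss_eq hne he]
        by_cases hneg : (rademacherSum fun t => σ' (j, t)) < 0
        · simp [σ₀, hneg, hneg.le]
        · simp [σ₀, hneg, not_lt.mp hneg, mul_comm]
    _ = ∑ p, boolSign (σ' p) * clusterLoss hne e σ₀ p.1 :=
        (sum_boolSign_mul_eq_sum_rademacherSum_mul σ' _).symm
    _ ≤ _ := le_sup' (fun σ => ∑ p, boolSign (σ' p) * clusterLoss hne e σ p.1) (mem_univ σ₀)

end Objective

lemma sum_sum_max_zero_rademacherSum_row (k m : ℕ) :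
    ∑ σ' : Fin k × Fin m → Bool, ∑ j, max 0 (rademacherSum fun t => σ' (j, t))
      = k * 2 ^ (m * (k - 1)) * ((∑ f : Fin m → Bool, |rademacherSum f|) / 2) := by
  rw [sum_comm, sum_congr rfl fun j _ => sum_rademacherSum_row j fun f => max 0 (rademacherSum f),
    sum_max_zero_rademacherSum, sum_const, card_univ, Fintype.card_fin, nsmul_eq_mul, nsmul_eq_mul]
  push_cast
  ring

/-- For `k = 1` the constant `4` is needed: the Khintchine constant `1/√3` alone is too weak. -/
lemma sqrt_mul_div_two_le {k : ℕ} (hk : 0 < k) (m : ℕ) :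
    √((k * m : ℝ) / 2) ≤ (if k = 1 then 4 else 2) * k / 2 * √((m : ℝ) / 3) := by
  have hm : (0 : ℝ) ≤ m := m.cast_nonneg
  rw [Real.sqrt_le_left (by positivity), mul_pow, Real.sq_sqrt (by positivity)]
  split_ifs with h
  · subst h
    norm_num
    nlinarith
  · have hk2 : (2 : ℝ) ≤ k := by exact_mod_cast (show 2 ≤ k by omega)
    nlinarith [mul_nonneg hm (by linarith : (0 : ℝ) ≤ k - 2)]

/-- Lower bound on the empirical clustering Rademacher complexity for the orthonormal
    configuration with n = k·m data points (n/k copies of each basis vector eⱼ). -/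
theorem clustering_rademacher_lower_bound {H : Type*} [NormedAddCommGroup H]
    [InnerProductSpace ℝ H] (k m : ℕ) (hk : 0 < k) (e : Fin k → H)
    (he : Orthonormal ℝ e) :
    Real.sqrt ((k * m : ℝ) / 2) ≤
      (∑ σ' : Fin k × Fin m → Bool,
          Finset.univ.sup' Finset.univ_nonempty
            (fun σ : Fin k → Bool =>
              ∑ p : Fin k × Fin m, (if σ' p then (1 : ℝ) else -1) *
                Finset.univ.inf' ⟨⟨0, hk⟩, Finset.mem_univ _⟩
                  (fun i => ‖e p.1 - (if σ i then (1 : ℝ) else -1) • e i‖ ^ 2))) /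
        2 ^ (k * m) := by
  set c : ℝ := if k = 1 then 4 else 2
  have hpow : (2 : ℝ) ^ (k * m) = 2 ^ (m * (k - 1)) * 2 ^ m := by
    rw [← pow_add, ← Nat.mul_add_one, Nat.sub_add_cancel hk, mul_comm]
  rw [le_div_iff₀ (by positivity)]
  calc √((k * m : ℝ) / 2) * 2 ^ (k * m) ≤ c * k / 2 * √((m : ℝ) / 3) * 2 ^ (k * m) := by
        gcongr; exact sqrt_mul_div_two_le hk m
    _ = c * (k * 2 ^ (m * (k - 1)) * ((√((m : ℝ) / 3) * 2 ^ m) / 2)) := by rw [hpow]; ring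
    _ ≤ c * (k * 2 ^ (m * (k - 1)) * ((∑ f : Fin m → Bool, |rademacherSum f|) / 2)) := by
        gcongr; exact sqrt_div_three_mul_two_pow_le_sum_abs_rademacherSum m
    _ = ∑ σ' : Fin k × Fin m → Bool, ∑ j, c * max 0 (rademacherSum fun t => σ' (j, t)) := by
        simp only [← mul_sum, sum_sum_max_zero_rademacherSum_row]
    _ ≤ _ := sum_le_sum fun σ' _ => sum_mul_max_zero_le_sup'_clusterLoss _ he σ'
end
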